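/- arXiv:2506.18397 — 2 statements merged into one kernel-verified Lean document; each statement's English description precedes it below -/
import Mathlib

section
/- Let ω ∈ (0,1], let J be a finite index set, and for each j ∈ J let w_j > 0, m_j ∈ ℝⁿ, and P_j an n×n real positive definite matrix. Then for every x ∈ ℝⁿ, (∑_{j ∈ J} w_j · N(x; m_j, P_j))^ω ≤ ∑_{j ∈ J} (w_j)^ω · κ(ω, P_j) · N(x; m_j, P_j/ω), where N(x; m, P) := ((2π)^n · det P)^(−1/2) · exp(−(1/2)·(x−m)ᵀ P⁻¹ (x−m)) and κ(ω,P) := ((2π/ω)^n · det P)^(1/2) / (((2π)^n · det P))^(ω/2). That is, the ω-power of a Gaussian mixture intensity is pointwise upper bounded by the Gaussian mixture with weights (w_j)^ω κ(ω,P_j), means m_j, and covariances P_j/ω. -/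
/-!
Since `t ↦ t ^ ω` is subadditive on `[0, ∞)` for `0 < ω ≤ 1`, the ω-power of the mixture is at
most the sum of the ω-powers of its components. The ω-power of a single Gaussian density is again
a Gaussian, with the quadratic form scaled by `ω`, i.e. covariance `P / ω`; the normalising
constants differ exactly by the factor `κ(ω, P)`.
-/

open MeasureTheory Matrix

/-- Multivariate Gaussian density `N(x; m, P)` on ℝⁿ. -/
noncomputable def gaussianPDF {n : ℕ} (m : Fin n → ℝ) (P : Matrix (Fin n) (Fin n) ℝ)
    (x : Fin n → ℝ) : ℝ :=
  ((2 * Real.pi) ^ n * P.det) ^ (-(1 : ℝ) / 2) *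
    Real.exp (-(1 / 2 : ℝ) * ((x - m) ⬝ᵥ (P⁻¹ *ᵥ (x - m))))

/-- The constant `κ(ω, P)`, the total mass of the ω-power of a Gaussian density. -/
noncomputable def kappa {n : ℕ} (ω : ℝ) (P : Matrix (Fin n) (Fin n) ℝ) : ℝ :=
  ((2 * Real.pi / ω) ^ n * P.det) ^ ((1 : ℝ) / 2) /
    ((2 * Real.pi) ^ n * P.det) ^ (ω / 2)

theorem Real.rpow_sum_le_sum_rpow {ι : Type*} {p : ℝ} (hp : 0 < p) (hp1 : p ≤ 1)
    (s : Finset ι) (f : ι → ℝ) (hf : ∀ i ∈ s, 0 ≤ f i) :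
    (∑ i ∈ s, f i) ^ p ≤ ∑ i ∈ s, f i ^ p :=
  Finset.le_sum_of_subadditive_on_pred (· ^ p) (0 ≤ ·) (Real.zero_rpow hp.ne').le
    (fun _ _ ha hb => Real.rpow_add_le_add_rpow ha hb hp.le hp1) (fun _ _ => add_nonneg) f hf

section Gaussian

variable {n : ℕ} (m x : Fin n → ℝ) (P : Matrix (Fin n) (Fin n) ℝ)

theorem gaussianPDF_nonneg (hP : 0 ≤ P.det) : 0 ≤ gaussianPDF m P x := by
  unfold gaussianPDF
  positivity

theorem gaussianPDF_inv_smul {c : ℝ} (hc : c ≠ 0) (hP : IsUnit P.det) :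
    gaussianPDF m (c⁻¹ • P) x = ((2 * Real.pi / c) ^ n * P.det) ^ (-(1 : ℝ) / 2) *
      Real.exp (-(1 / 2 : ℝ) * (c * ((x - m) ⬝ᵥ (P⁻¹ *ᵥ (x - m))))) := by
  have hinv : (c⁻¹ • P)⁻¹ = c • P⁻¹ := by
    simpa [Units.smul_def] using P.inv_smul' (Units.mk0 c⁻¹ (inv_ne_zero hc)) hP
  rw [gaussianPDF, hinv, det_smul, Fintype.card_fin, smul_mulVec, dotProduct_smul, smul_eq_mul,
    inv_pow, ← mul_assoc, ← div_eq_mul_inv, ← div_pow]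

theorem gaussianPDF_rpow {ω : ℝ} (hω : 0 < ω) (hP : 0 < P.det) :
    gaussianPDF m P x ^ ω = kappa ω P * gaussianPDF m (ω⁻¹ • P) x := by
  rw [kappa, gaussianPDF_inv_smul m x P hω.ne' hP.ne'.isUnit, gaussianPDF]
  set D := (2 * Real.pi) ^ n * P.det
  set E := (2 * Real.pi / ω) ^ n * P.det
  have hD : 0 < D := by positivity
  have hE : 0 < E := by positivity
  rw [Real.mul_rpow (by positivity) (by positivity), ← Real.rpow_mul hD.le, ← Real.exp_mul,
    neg_div, Real.rpow_neg hE.le, neg_mul, Real.rpow_neg hD.le]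
  field_simp

end Gaussian

/-- The ω-power of a Gaussian mixture intensity is pointwise upper bounded by the
Gaussian mixture with weights `(w j)^ω κ(ω, P j)`, means `m j` and covariances `P j / ω`. -/
theorem rpow_gaussian_mixture_le {n : ℕ} {J : Type*} (ω : ℝ) (hω : ω ∈ Set.Ioc (0 : ℝ) 1)
    (s : Finset J) (w : J → ℝ) (m : J → Fin n → ℝ)
    (P : J → Matrix (Fin n) (Fin n) ℝ)
    (hw : ∀ j ∈ s, 0 < w j) (hP : ∀ j ∈ s, (P j).PosDef) :
    ∀ x, (∑ j ∈ s, w j * gaussianPDF (m j) (P j) x) ^ ω ≤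
      ∑ j ∈ s, w j ^ ω * kappa ω (P j) * gaussianPDF (m j) (ω⁻¹ • P j) x := by
  intro x
  obtain ⟨hω0, hω1⟩ := hω
  have hpdf : ∀ j ∈ s, 0 ≤ gaussianPDF (m j) (P j) x := fun j hj =>
    gaussianPDF_nonneg _ _ _ (hP j hj).det_pos.le
  calc (∑ j ∈ s, w j * gaussianPDF (m j) (P j) x) ^ ω
      ≤ ∑ j ∈ s, (w j * gaussianPDF (m j) (P j) x) ^ ω :=
        Real.rpow_sum_le_sum_rpow hω0 hω1 s _ fun j hj => mul_nonneg (hw j hj).le (hpdf j hj)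
    _ = ∑ j ∈ s, w j ^ ω * kappa ω (P j) * gaussianPDF (m j) (ω⁻¹ • P j) x := by
        refine Finset.sum_congr rfl fun j hj => ?_
        rw [Real.mul_rpow (hw j hj).le (hpdf j hj),
          gaussianPDF_rpow _ _ _ hω0 (hP j hj).det_pos, mul_assoc]
end

section
/- Let r ∈ [0,1], let p : ℝⁿ → ℝ be a nonnegative measurable function with ∫ p = 1, and let λ : ℝⁿ → ℝ be a nonnegative measurable function (an intensity). Assume ⟨p,λ⟩ := ∫ p(x)·λ(x) dx is finite and positive, and define ρ := 1 − r + r·⟨p,λ⟩, r₀ := r·⟨p,λ⟩ / ρ, and p₀(x) := p(x)·λ(x) / ⟨p,λ⟩. Then: (i) ρ > 0; (ii) 1 − r = ρ·(1−r₀); (iii) for every x, r·p(x)·λ(x) = ρ · r₀ · p₀(x); (iv) r₀ ∈ [0,1]; and (v) ∫ p₀(x) dx = 1. That is, fusing a Bernoulli component with a Poisson point process intensity λ yields ρ times the Bernoulli density with existence probability r₀ and single-object density p₀. -/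
open MeasureTheory

/-- The paper's `ρ`, as a function of `r` and `c = ⟨p, λ⟩`; `fusedExistence r c` is its `r₀`. -/
noncomputable def fusionWeight (r c : ℝ) : ℝ := 1 - r + r * c

noncomputable def fusedExistence (r c : ℝ) : ℝ := r * c / fusionWeight r c

section Fusion

variable {r c : ℝ}

theorem fusionWeight_pos (hr : r ∈ Set.Icc (0 : ℝ) 1) (hc : 0 < c) : 0 < fusionWeight r c := by
  obtain ⟨hr0, hr1⟩ := hr
  unfold fusionWeight
  rcases hr1.lt_or_eq with hr1 | rfl
  · linarith [mul_nonneg hr0 hc.le]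
  · linarith

theorem fusionWeight_mul_fusedExistence (h : fusionWeight r c ≠ 0) :
    fusionWeight r c * fusedExistence r c = r * c := by
  unfold fusedExistence
  field_simp

theorem one_sub_eq_fusionWeight_mul_one_sub_fusedExistence (h : fusionWeight r c ≠ 0) :
    1 - r = fusionWeight r c * (1 - fusedExistence r c) := by
  rw [mul_one_sub, fusionWeight_mul_fusedExistence h, fusionWeight]
  ring

theorem fusedExistence_mem_Icc (hr : r ∈ Set.Icc (0 : ℝ) 1) (hc : 0 < c) :
    fusedExistence r c ∈ Set.Icc (0 : ℝ) 1 := by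
  have hρ := fusionWeight_pos hr hc
  refine ⟨div_nonneg (mul_nonneg hr.1 hc.le) hρ.le, ?_⟩
  rw [fusedExistence, div_le_one hρ, fusionWeight]
  linarith [hr.2]

end Fusion

theorem integral_div_integral_self {α : Type*} [MeasurableSpace α] {μ : Measure α}
    {f : α → ℝ} (hf : ∫ x, f x ∂μ ≠ 0) : ∫ x, f x / ∫ y, f y ∂μ ∂μ = 1 := by
  rw [integral_div, div_self hf]

theorem bernoulli_poisson_fusion_general {n : ℕ} (r : ℝ) (hr : r ∈ Set.Icc (0 : ℝ) 1)
    (p lam : (Fin n → ℝ) → ℝ)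
    (ip ρ r₀ : ℝ) (p₀ : (Fin n → ℝ) → ℝ)
    (hip : ip = ∫ x, p x * lam x) (hip_pos : 0 < ip)
    (hρ : ρ = 1 - r + r * ip)
    (hr₀ : r₀ = r * ip / ρ)
    (hp₀ : p₀ = fun x => p x * lam x / ip) :
    0 < ρ ∧
    1 - r = ρ * (1 - r₀) ∧
    (∀ x, r * p x * lam x = ρ * r₀ * p₀ x) ∧
    r₀ ∈ Set.Icc (0 : ℝ) 1 ∧
    (∫ x, p₀ x) = 1 := by
  replace hρ : ρ = fusionWeight r ip := hρ
  replace hr₀ : r₀ = fusedExistence r ip := by rw [hr₀, hρ, fusedExistence]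
  subst hρ hr₀ hp₀
  have hρ_pos := fusionWeight_pos hr hip_pos
  refine ⟨hρ_pos, one_sub_eq_fusionWeight_mul_one_sub_fusedExistence hρ_pos.ne', fun x => ?_,
    fusedExistence_mem_Icc hr hip_pos, ?_⟩
  · rw [fusionWeight_mul_fusedExistence hρ_pos.ne']
    field_simp
  · subst hip
    exact integral_div_integral_self hip_pos.ne'

/-- Bernoulli–Poisson fusion: fusing a Bernoulli component with a Poisson point process
intensity `lam` yields `ρ` times the Bernoulli density with existence probability `r₀`
and single-object density `p₀`. -/
theorem bernoulli_poisson_fusion {n : ℕ} (r : ℝ) (hr : r ∈ Set.Icc (0 : ℝ) 1)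
    (p lam : (Fin n → ℝ) → ℝ)
    (hp_meas : Measurable p) (hlam_meas : Measurable lam)
    (hp_nn : ∀ x, 0 ≤ p x) (hlam_nn : ∀ x, 0 ≤ lam x)
    (hp_int : ∫ x, p x = 1)
    (hprod_int : Integrable fun x => p x * lam x)
    (ip ρ r₀ : ℝ) (p₀ : (Fin n → ℝ) → ℝ)
    (hip : ip = ∫ x, p x * lam x) (hip_pos : 0 < ip)
    (hρ : ρ = 1 - r + r * ip)
    (hr₀ : r₀ = r * ip / ρ)
    (hp₀ : p₀ = fun x => p x * lam x / ip) :
    0 < ρ ∧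
    1 - r = ρ * (1 - r₀) ∧
    (∀ x, r * p x * lam x = ρ * r₀ * p₀ x) ∧
    r₀ ∈ Set.Icc (0 : ℝ) 1 ∧
    (∫ x, p₀ x) = 1 :=
  bernoulli_poisson_fusion_general r hr p lam ip ρ r₀ p₀ hip hip_pos hρ hr₀ hp₀
end
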